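/- Let q : ℝ × ℝ → ℝ be smooth and nowhere zero. If q satisfies the scalar meta-mKdV equation q_t = q_xxx - 3 q_x q_xx / q, then v := q_x / q satisfies the scalar mKdV equation v_t = v_xxx - 6 v² v_x. -/

import Mathlib

/-- partial derivative in the first (space) variable -/
noncomputable def px (q : ℝ × ℝ → ℝ) : ℝ × ℝ → ℝ := fun p => deriv (fun x => q (x, p.2)) p.1

/-- partial derivative in the second (time) variable -/
noncomputable def pt (q : ℝ × ℝ → ℝ) : ℝ × ℝ → ℝ := fun p => deriv (fun t => q (p.1, t)) p.2

section Helpers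
variable {f g : ℝ × ℝ → ℝ}

lemma hasDerivAt_px (hf : ContDiff ℝ (⊤ : ℕ∞) f) (p : ℝ × ℝ) :
    HasDerivAt (fun x => f (x, p.2)) (fderiv ℝ f p ((1 : ℝ), (0 : ℝ))) p.1 := by
  have h1 : HasDerivAt (fun x : ℝ => ((x, p.2) : ℝ × ℝ)) ((1 : ℝ), (0 : ℝ)) p.1 :=
    (hasDerivAt_id p.1).prodMk (hasDerivAt_const p.1 p.2)
  have h2 : HasFDerivAt f (fderiv ℝ f p) (p.1, p.2) := by
    rw [Prod.mk.eta]; exact (hf.differentiable (by simp) p).hasFDerivAt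
  exact h2.comp_hasDerivAt p.1 h1

lemma hasDerivAt_pt (hf : ContDiff ℝ (⊤ : ℕ∞) f) (p : ℝ × ℝ) :
    HasDerivAt (fun t => f (p.1, t)) (fderiv ℝ f p ((0 : ℝ), (1 : ℝ))) p.2 := by
  have h1 : HasDerivAt (fun t : ℝ => ((p.1, t) : ℝ × ℝ)) ((0 : ℝ), (1 : ℝ)) p.2 :=
    (hasDerivAt_const p.2 p.1).prodMk (hasDerivAt_id p.2)
  have h2 : HasFDerivAt f (fderiv ℝ f p) (p.1, p.2) := by
    rw [Prod.mk.eta]; exact (hf.differentiable (by simp) p).hasFDerivAt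
  exact h2.comp_hasDerivAt p.2 h1

lemma px_eq (hf : ContDiff ℝ (⊤ : ℕ∞) f) (p : ℝ × ℝ) :
    px f p = fderiv ℝ f p ((1 : ℝ), (0 : ℝ)) := (hasDerivAt_px hf p).deriv

lemma pt_eq (hf : ContDiff ℝ (⊤ : ℕ∞) f) (p : ℝ × ℝ) :
    pt f p = fderiv ℝ f p ((0 : ℝ), (1 : ℝ)) := (hasDerivAt_pt hf p).deriv

lemma slice_px (hf : ContDiff ℝ (⊤ : ℕ∞) f) (p : ℝ × ℝ) :
    HasDerivAt (fun x => f (x, p.2)) (px f p) p.1 := by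
  have := hasDerivAt_px hf p; rwa [← px_eq hf p] at this

lemma slice_pt (hf : ContDiff ℝ (⊤ : ℕ∞) f) (p : ℝ × ℝ) :
    HasDerivAt (fun t => f (p.1, t)) (pt f p) p.2 := by
  have := hasDerivAt_pt hf p; rwa [← pt_eq hf p] at this

lemma contDiff_px (hf : ContDiff ℝ (⊤ : ℕ∞) f) : ContDiff ℝ (⊤ : ℕ∞) (px f) := by
  have : px f = fun p => fderiv ℝ f p ((1 : ℝ), (0 : ℝ)) := funext fun p => px_eq hf p
  rw [this]
  exact (hf.fderiv_right (by simp)).clm_apply contDiff_const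

lemma clairaut (hf : ContDiff ℝ (⊤ : ℕ∞) f) (p : ℝ × ℝ) : pt (px f) p = px (pt f) p := by
  have hdf : DifferentiableAt ℝ (fderiv ℝ f) p :=
    ((hf.fderiv_right (m := 1) (WithTop.coe_le_coe.mpr le_top)).differentiable (by simp)) p
  have e1 : px f = fun r => fderiv ℝ f r ((1 : ℝ), (0 : ℝ)) := funext fun r => px_eq hf r
  have e2 : pt f = fun r => fderiv ℝ f r ((0 : ℝ), (1 : ℝ)) := funext fun r => pt_eq hf r
  have cpx : ContDiff ℝ (⊤ : ℕ∞) (px f) := contDiff_px hf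
  have cpt : ContDiff ℝ (⊤ : ℕ∞) (pt f) := by
    rw [e2]; exact (hf.fderiv_right (by simp)).clm_apply contDiff_const
  rw [pt_eq cpx p, px_eq cpt p, e1, e2,
    fderiv_clm_apply hdf (differentiableAt_const _),
    fderiv_clm_apply hdf (differentiableAt_const _)]
  simp only [fderiv_fun_const, Pi.zero_apply, ContinuousLinearMap.comp_zero, zero_add,
    ContinuousLinearMap.add_apply, ContinuousLinearMap.flip_apply]
  exact (hf.contDiffAt.isSymmSndFDerivAt (by rw [minSmoothness_of_isRCLikeNormedField]; exact WithTop.coe_le_coe.mpr (le_top : (2:ℕ∞) ≤ ⊤))) _ _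

end Helpers

theorem stmt_18 (q : ℝ × ℝ → ℝ) (hq : ContDiff ℝ (⊤ : ℕ∞) q)
    (hne : ∀ p : ℝ × ℝ, q p ≠ 0)
    (heq : ∀ p : ℝ × ℝ, pt q p = px (px (px q)) p - 3 * px q p * px (px q) p / q p) :
    ∀ p : ℝ × ℝ,
      pt (fun r => px q r / q r) p
        = px (px (px (fun r => px q r / q r))) p
          - 6 * (px q p / q p) ^ 2 * px (fun r => px q r / q r) p := by
  intro p
  have Cq := hq
  have C1 : ContDiff ℝ (⊤ : ℕ∞) (px q) := contDiff_px hq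
  have C2 : ContDiff ℝ (⊤ : ℕ∞) (px (px q)) := contDiff_px C1
  have C3 : ContDiff ℝ (⊤ : ℕ∞) (px (px (px q))) := contDiff_px C2
  -- first x-derivative of v
  have e1 : px (fun r => px q r / q r)
      = fun r => (px (px q) r * q r - px q r * px q r) / (q r * q r) := by
    funext r
    have h := ((slice_px C1 r).div (slice_px Cq r) (hne r)).deriv
    rw [pow_two] at h; exact h
  -- second x-derivative of v
  have e2 : px (fun r => (px (px q) r * q r - px q r * px q r) / (q r * q r))
      = fun r => ((px (px (px q)) r * q r + px (px q) r * px q r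
            - (px (px q) r * px q r + px q r * px (px q) r)) * (q r * q r)
          - (px (px q) r * q r - px q r * px q r) * (px q r * q r + q r * px q r))
          / (q r * q r * (q r * q r)) := by
    funext r
    have h := ((((slice_px C2 r).mul (slice_px Cq r)).sub
        ((slice_px C1 r).mul (slice_px C1 r))).div
        ((slice_px Cq r).mul (slice_px Cq r)) (mul_ne_zero (hne r) (hne r))).deriv
    rw [pow_two] at h; exact h
  -- third x-derivative of v, at the point p
  have h3 : px (fun r => ((px (px (px q)) r * q r + px (px q) r * px q r
            - (px (px q) r * px q r + px q r * px (px q) r)) * (q r * q r)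
          - (px (px q) r * q r - px q r * px q r) * (px q r * q r + q r * px q r))
          / (q r * q r * (q r * q r))) p = _ :=
    ((((((slice_px C3 p).mul (slice_px Cq p)).add
        ((slice_px C2 p).mul (slice_px C1 p))).sub
        (((slice_px C2 p).mul (slice_px C1 p)).add ((slice_px C1 p).mul (slice_px C2 p)))).mul
        ((slice_px Cq p).mul (slice_px Cq p))).sub
      ((((slice_px C2 p).mul (slice_px Cq p)).sub ((slice_px C1 p).mul (slice_px C1 p))).mul
        (((slice_px C1 p).mul (slice_px Cq p)).add ((slice_px Cq p).mul (slice_px C1 p))))).div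
      (((slice_px Cq p).mul (slice_px Cq p)).mul ((slice_px Cq p).mul (slice_px Cq p)))
      (mul_ne_zero (mul_ne_zero (hne p) (hne p)) (mul_ne_zero (hne p) (hne p))) |>.deriv
  -- time derivative of v at p
  have ht1 : pt (fun r => px q r / q r) p
      = (pt (px q) p * q p - px q p * pt q p) / (q p * q p) := by
    have h := ((slice_pt C1 p).div (slice_pt Cq p) (hne p)).deriv
    rw [pow_two] at h; exact h
  have hc : pt (px q) p = px (pt q) p := clairaut hq p
  have hfun : pt q = fun r => px (px (px q)) r - 3 * px q r * px (px q) r / q r := funext heq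
  have ht2 : px (fun r => px (px (px q)) r - 3 * px q r * px (px q) r / q r) p = _ :=
    ((slice_px C3 p).sub
      ((((slice_px C1 p).const_mul (3:ℝ)).mul (slice_px C2 p)).div
        (slice_px Cq p) (hne p))).deriv
  simp only [Prod.mk.eta, Pi.mul_apply, Pi.add_apply, Pi.sub_apply, Pi.pow_apply] at h3 ht2
  rw [ht1, heq p, hc, hfun, ht2]
  simp only [e1, e2]
  rw [h3]
  have a0 := hne p
  field_simp
  ring
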